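/- arXiv:2303.13975 — 3 statements merged into one kernel-verified Lean document; each statement's English description precedes it below -/
import Mathlib

section
/- For every natural number n and every real x, 1 = (2/((n+1)(n+2))) * ∑_{(i,j): i+j ≤ n} c_{ij} x^i (1-x)^j, where c_{ij} = (i+j+1)! / (i! j!). -/
/-- The sum over all pairs (i,j) with i+j ≤ n of c_{ij} x^i (1-x)^j, with
c_{ij} = (i+j+1)!/(i! j!), scaled by 2/((n+1)(n+2)), equals 1 for all real x. -/
theorem handelman_partition_of_unity (n : ℕ) (x : ℝ) :
    1 = (2 / ((n + 1 : ℝ) * (n + 2))) *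
      ∑ k ∈ Finset.range (n + 1), ∑ i ∈ Finset.range (k + 1),
        ((Nat.factorial (i + (k - i) + 1) : ℝ) /
            ((Nat.factorial i : ℝ) * (Nat.factorial (k - i) : ℝ))) *
          x ^ i * (1 - x) ^ (k - i) := by
  have hinner : ∀ k : ℕ, ∑ i ∈ Finset.range (k + 1),
      ((Nat.factorial (i + (k - i) + 1) : ℝ) /
          ((Nat.factorial i : ℝ) * (Nat.factorial (k - i) : ℝ))) *
        x ^ i * (1 - x) ^ (k - i) = (k : ℝ) + 1 := by
    intro k
    have hb : ∑ i ∈ Finset.range (k + 1),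
        (k.choose i : ℝ) * x ^ i * (1 - x) ^ (k - i) = 1 := by
      have := add_pow x (1 - x) k
      simp only [add_sub_cancel, one_pow] at this
      conv_rhs => rw [this]
      apply Finset.sum_congr rfl
      intro i _
      ring
    calc ∑ i ∈ Finset.range (k + 1),
          ((Nat.factorial (i + (k - i) + 1) : ℝ) /
              ((Nat.factorial i : ℝ) * (Nat.factorial (k - i) : ℝ))) *
            x ^ i * (1 - x) ^ (k - i)
        = ∑ i ∈ Finset.range (k + 1),
            ((k : ℝ) + 1) * ((k.choose i : ℝ) * x ^ i * (1 - x) ^ (k - i)) := by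
          apply Finset.sum_congr rfl
          intro i hi
          have hik : i ≤ k := Nat.lt_succ_iff.mp (Finset.mem_range.mp hi)
          have hfact : (Nat.factorial (i + (k - i) + 1) : ℝ) =
              ((k : ℝ) + 1) * (k.choose i : ℝ) *
                ((Nat.factorial i : ℝ) * (Nat.factorial (k - i) : ℝ)) := by
            rw [Nat.add_sub_cancel' hik]
            have := Nat.choose_mul_factorial_mul_factorial hik
            have h2 : (k + 1) * (k.choose i * (Nat.factorial i * Nat.factorial (k - i)))
                = Nat.factorial (k + 1) := by
              rw [Nat.factorial_succ, ← this]; ring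
            push_cast [← h2]
            ring
          rw [hfact]
          have h1 : (Nat.factorial i : ℝ) ≠ 0 := Nat.cast_ne_zero.mpr (Nat.factorial_ne_zero i)
          have h2 : (Nat.factorial (k - i) : ℝ) ≠ 0 := Nat.cast_ne_zero.mpr (Nat.factorial_ne_zero _)
          field_simp
      _ = ((k : ℝ) + 1) * ∑ i ∈ Finset.range (k + 1),
            (k.choose i : ℝ) * x ^ i * (1 - x) ^ (k - i) := by
          rw [Finset.mul_sum]
      _ = (k : ℝ) + 1 := by rw [hb, mul_one]
  simp only [hinner]
  have hsum : ∑ k ∈ Finset.range (n + 1), ((k : ℝ) + 1) = ((n : ℝ) + 1) * ((n : ℝ) + 2) / 2 := by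
    induction n with
    | zero => norm_num
    | succ m ih =>
      rw [Finset.sum_range_succ, ih]
      push_cast
      ring
  rw [hsum]
  have h1 : ((n : ℝ) + 1) ≠ 0 := by positivity
  have h2 : ((n : ℝ) + 2) ≠ 0 := by positivity
  field_simp
end

section
/- Let g_j(x) = x_j for j = 1,…,d, g_{d+1}(x) = 1 - ∑ x_i, and φ* be the uniform probability measure on the canonical simplex in ℝ^d. Then for all x ∈ ℝ^d: ∑_{|α| ≤ 2, α ∈ ℕ^{d+1}} g(x)^α / φ*(g^α) = (d+2)(d+3)/2, where g(x)^α = ∏_{j=1}^{d+1} g_j(x)^{α_j}. -/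
/-!
Write `φ*` for `d! • volume` restricted to the simplex `S`. By induction on `d`, integrating out
the last coordinate `t ∈ [0, 1 - ∑ z]` (a beta integral that merges the exponents of `t` and of
`1 - ∑ z - t` into one exponent of the last generator), one gets the Dirichlet integral
`φ*(g^a) = d! ∏ aⱼ! / (d + |a|)!`. So for `|α| = k` the term `g(x)^α / φ*(g^α)` is
`C(d+k, k)` times the multinomial coefficient of `α` times `g(x)^α`, and the terms of degree `k`
sum to `C(d+k, k) (∑ⱼ gⱼ(x))^k = C(d+k, k)`. Finally `1 + (d+1) + C(d+2, 2) = (d+2)(d+3)/2`.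
-/

open MeasureTheory Finset ENNReal

/-- The generators of the canonical simplex: `g_j(x) = x_j` for `j < d` and
`g_{d+1}(x) = 1 - ∑ x_i`. -/
noncomputable def simplexGen (d : ℕ) (j : Fin (d + 1)) (y : Fin d → ℝ) : ℝ :=
  if h : (j : ℕ) < d then y ⟨j, h⟩ else 1 - ∑ i, y i

open scoped Nat

theorem intervalIntegral_pow_mul_one_sub_pow (m n : ℕ) :
    ∫ x in (0 : ℝ)..1, x ^ m * (1 - x) ^ n = (m ! * n ! : ℝ) / (m + n + 1)! := by
  have hΓ (k : ℕ) : Complex.Gamma ((k : ℂ) + 1) = k ! := by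
    exact_mod_cast Complex.Gamma_nat_eq_factorial k
  have hB : Complex.betaIntegral ((m : ℂ) + 1) ((n : ℂ) + 1)
      = ((∫ x in (0 : ℝ)..1, x ^ m * (1 - x) ^ n : ℝ) : ℂ) := by
    rw [Complex.betaIntegral, ← intervalIntegral.integral_ofReal]
    refine intervalIntegral.integral_congr fun x _ => ?_
    push_cast
    rw [add_sub_cancel_right, add_sub_cancel_right, Complex.cpow_natCast, Complex.cpow_natCast]
  have h := Complex.Gamma_mul_Gamma_eq_betaIntegral
    (s := (m : ℂ) + 1) (t := (n : ℂ) + 1) (by simp; positivity) (by simp; positivity)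
  rw [show (m : ℂ) + 1 + ((n : ℂ) + 1) = ((m + n + 1 : ℕ) : ℂ) + 1 by push_cast; ring,
    hΓ, hΓ, hΓ, hB] at h
  rw [_root_.eq_div_iff (by positivity), mul_comm]
  exact_mod_cast h.symm

theorem intervalIntegral_pow_mul_sub_pow (c : ℝ) (m n : ℕ) :
    ∫ x in (0 : ℝ)..c, x ^ m * (c - x) ^ n
      = c ^ (m + n + 1) * ((m ! * n ! : ℝ) / (m + n + 1)!) := by
  have hscale (x : ℝ) : (c * x) ^ m * (c - c * x) ^ n = c ^ (m + n) * (x ^ m * (1 - x) ^ n) := by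
    rw [show c - c * x = c * (1 - x) by ring, mul_pow, mul_pow]; ring
  have h := intervalIntegral.smul_integral_comp_mul_left
    (fun x : ℝ => x ^ m * (c - x) ^ n) c (a := 0) (b := 1)
  simp only [mul_zero, mul_one, smul_eq_mul, hscale] at h
  rw [← h, intervalIntegral.integral_const_mul, intervalIntegral_pow_mul_one_sub_pow]
  ring

theorem setLIntegral_Icc_pow_mul_sub_pow {c : ℝ} (hc : 0 ≤ c) (m n : ℕ) :
    ∫⁻ t in Set.Icc 0 c, ENNReal.ofReal (t ^ m * (c - t) ^ n)
      = ENNReal.ofReal (c ^ (m + n + 1) * ((m ! * n ! : ℝ) / (m + n + 1)!)) := by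
  have hint : IntegrableOn (fun t : ℝ => t ^ m * (c - t) ^ n) (Set.Icc 0 c) :=
    (by fun_prop : Continuous fun t : ℝ => t ^ m * (c - t) ^ n).integrableOn_Icc
  have hnonneg : 0 ≤ᵐ[volume.restrict (Set.Icc 0 c)] fun t : ℝ => t ^ m * (c - t) ^ n :=
    (ae_restrict_iff' measurableSet_Icc).2 <| ae_of_all _ fun t ht =>
      mul_nonneg (pow_nonneg ht.1 _) (pow_nonneg (sub_nonneg.2 ht.2) _)
  rw [← ofReal_integral_eq_lintegral_ofReal hint hnonneg, integral_Icc_eq_integral_Ioc,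
    ← intervalIntegral.integral_of_le hc, intervalIntegral_pow_mul_sub_pow]

theorem lintegral_comp_snoc {α : Type*} [MeasureSpace α] [SigmaFinite (volume : Measure α)]
    {n : ℕ} {f : (Fin (n + 1) → α) → ℝ≥0∞} (hf : Measurable f) :
    ∫⁻ y, f y = ∫⁻ z : Fin n → α, ∫⁻ t : α, f (Fin.snoc z t) := by
  have hsnoc := (volume_preserving_piFinSuccAbove (fun _ : Fin (n + 1) => α) (Fin.last n)).symm
  rw [← hsnoc.lintegral_comp hf, Measure.volume_eq_prod]
  refine (lintegral_prod_symm _ (hf.comp hsnoc.measurable).aemeasurable).trans ?_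
  simp [MeasurableEquiv.piFinSuccAbove, Fin.snocEquiv]

def canonicalSimplex (d : ℕ) : Set (Fin d → ℝ) := {y | (∀ i, 0 ≤ y i) ∧ ∑ i, y i ≤ 1}

theorem measurableSet_canonicalSimplex (d : ℕ) : MeasurableSet (canonicalSimplex d) := by
  have : canonicalSimplex d = (⋂ i, {y | 0 ≤ y i}) ∩ {y | ∑ i, y i ≤ 1} := by
    ext y; simp [canonicalSimplex]
  rw [this]
  exact (MeasurableSet.iInter fun i =>
    measurableSet_le measurable_const (measurable_pi_apply i)).inter
      (measurableSet_le (by fun_prop) measurable_const)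

theorem canonicalSimplex_zero : canonicalSimplex 0 = Set.univ := by
  ext y; simp [canonicalSimplex]

theorem snoc_mem_canonicalSimplex_iff {d : ℕ} {z : Fin d → ℝ} {t : ℝ} :
    (Fin.snoc z t : Fin (d + 1) → ℝ) ∈ canonicalSimplex (d + 1) ↔
      z ∈ canonicalSimplex d ∧ t ∈ Set.Icc 0 (1 - ∑ i, z i) := by
  simp only [canonicalSimplex, Set.mem_ofPred_eq, Set.mem_Icc, Fin.forall_fin_succ',
    Fin.sum_univ_castSucc, Fin.snoc_castSucc, Fin.snoc_last]
  constructor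
  · rintro ⟨⟨hz, ht⟩, hsum⟩
    exact ⟨⟨hz, by linarith⟩, ht, by linarith⟩
  · rintro ⟨⟨hz, -⟩, ht, ht'⟩
    exact ⟨⟨hz, ht⟩, by linarith⟩

theorem setLIntegral_canonicalSimplex_succ {d : ℕ} {f : (Fin (d + 1) → ℝ) → ℝ≥0∞}
    (hf : Measurable f) :
    ∫⁻ y in canonicalSimplex (d + 1), f y
      = ∫⁻ z in canonicalSimplex d, ∫⁻ t in Set.Icc 0 (1 - ∑ i, z i), f (Fin.snoc z t) := by
  rw [← lintegral_indicator (measurableSet_canonicalSimplex _),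
    lintegral_comp_snoc (hf.indicator (measurableSet_canonicalSimplex _)),
    ← lintegral_indicator (measurableSet_canonicalSimplex _)]
  congr 1 with z
  by_cases hz : z ∈ canonicalSimplex d
  · rw [Set.indicator_of_mem hz, ← lintegral_indicator measurableSet_Icc]
    congr 1 with t
    simp only [Set.indicator, snoc_mem_canonicalSimplex_iff, hz, true_and]
  · simp [Set.indicator, snoc_mem_canonicalSimplex_iff, hz]

theorem simplexGen_castSucc {d : ℕ} (j : Fin d) (y : Fin d → ℝ) :
    simplexGen d j.castSucc y = y j := by
  simp [simplexGen]

theorem simplexGen_last (d : ℕ) (y : Fin d → ℝ) :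
    simplexGen d (Fin.last d) y = 1 - ∑ i, y i := by
  simp [simplexGen]

theorem sum_simplexGen (d : ℕ) (y : Fin d → ℝ) : ∑ j, simplexGen d j y = 1 := by
  simp [Fin.sum_univ_castSucc, simplexGen_castSucc, simplexGen_last]

theorem measurable_simplexGen (d : ℕ) (j : Fin (d + 1)) : Measurable (simplexGen d j) := by
  unfold simplexGen
  split_ifs <;> fun_prop

theorem simplexGen_nonneg {d : ℕ} (j : Fin (d + 1)) {y : Fin d → ℝ}
    (hy : y ∈ canonicalSimplex d) : 0 ≤ simplexGen d j y := by
  unfold simplexGen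
  split_ifs
  · exact hy.1 _
  · linarith [hy.2]

noncomputable def simplexGenPow (d : ℕ) (a : Fin (d + 1) → ℕ) (y : Fin d → ℝ) : ℝ :=
  ∏ j, simplexGen d j y ^ a j

theorem measurable_simplexGenPow (d : ℕ) (a : Fin (d + 1) → ℕ) :
    Measurable (simplexGenPow d a) :=
  Finset.measurable_prod _ fun j _ => (measurable_simplexGen d j).pow_const _

theorem simplexGenPow_nonneg {d : ℕ} (a : Fin (d + 1) → ℕ) {y : Fin d → ℝ}
    (hy : y ∈ canonicalSimplex d) : 0 ≤ simplexGenPow d a y :=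
  prod_nonneg fun j _ => pow_nonneg (simplexGen_nonneg j hy) _

theorem simplexGenPow_snoc {d : ℕ} (b : Fin d → ℕ) (k : ℕ) (y : Fin d → ℝ) :
    simplexGenPow d (Fin.snoc b k) y = (∏ j, y j ^ b j) * (1 - ∑ i, y i) ^ k := by
  simp [simplexGenPow, Fin.prod_univ_castSucc, simplexGen_castSucc, simplexGen_last]

theorem simplexGenPow_succ_snoc {d : ℕ} (b : Fin d → ℕ) (m n : ℕ) (z : Fin d → ℝ) (t : ℝ) :
    simplexGenPow (d + 1) (Fin.snoc (Fin.snoc b m) n) (Fin.snoc z t)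
      = (∏ j, z j ^ b j) * (t ^ m * (1 - ∑ i, z i - t) ^ n) := by
  simp [simplexGenPow_snoc, Fin.prod_univ_castSucc, Fin.sum_univ_castSucc, sub_sub, mul_assoc]

theorem setLIntegral_simplexGenPow_succ_snoc {d : ℕ} (b : Fin d → ℕ) (m n : ℕ)
    {z : Fin d → ℝ} (hz : z ∈ canonicalSimplex d) :
    ∫⁻ t in Set.Icc 0 (1 - ∑ i, z i),
        ENNReal.ofReal (simplexGenPow (d + 1) (Fin.snoc (Fin.snoc b m) n) (Fin.snoc z t))
      = ENNReal.ofReal (simplexGenPow d (Fin.snoc b (m + n + 1)) z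
          * ((m ! * n ! : ℝ) / (m + n + 1)!)) := by
  have hprod : 0 ≤ ∏ j, z j ^ b j := prod_nonneg fun j _ => pow_nonneg (hz.1 j) _
  simp_rw [simplexGenPow_succ_snoc, ENNReal.ofReal_mul hprod]
  rw [lintegral_const_mul' _ _ ofReal_ne_top,
    setLIntegral_Icc_pow_mul_sub_pow (sub_nonneg.2 hz.2), ← ENNReal.ofReal_mul hprod,
    simplexGenPow_snoc, mul_assoc]

theorem setLIntegral_canonicalSimplex_simplexGenPow (d : ℕ) (a : Fin (d + 1) → ℕ) :
    ∫⁻ y in canonicalSimplex d, ENNReal.ofReal (simplexGenPow d a y)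
      = ENNReal.ofReal ((∏ j, ((a j)! : ℝ)) / (d + ∑ j, a j)!) := by
  induction d with
  | zero =>
    obtain ⟨b, k, rfl⟩ : ∃ b k, a = Fin.snoc b k :=
      ⟨Fin.init a, _, (Fin.snoc_init_self a).symm⟩
    simp [canonicalSimplex_zero, simplexGenPow_snoc, volume_pi, Nat.factorial_ne_zero]
  | succ d ih =>
    obtain ⟨b, m, n, rfl⟩ : ∃ b m n, a = Fin.snoc (Fin.snoc b m) n :=
      ⟨Fin.init (Fin.init a), Fin.init a (Fin.last d), a (Fin.last (d + 1)),
        by rw [Fin.snoc_init_self, Fin.snoc_init_self]⟩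
    rw [setLIntegral_canonicalSimplex_succ (measurable_simplexGenPow _ _).ennreal_ofReal,
      setLIntegral_congr_fun (measurableSet_canonicalSimplex d)
        fun z hz => setLIntegral_simplexGenPow_succ_snoc b m n hz]
    simp_rw [ENNReal.ofReal_mul' (by positivity : (0 : ℝ) ≤ (m ! * n ! : ℝ) / (m + n + 1)!)]
    rw [lintegral_mul_const' _ _ ofReal_ne_top, ih, ← ENNReal.ofReal_mul' (by positivity)]
    congr 1
    simp only [Fin.prod_univ_castSucc, Fin.sum_univ_castSucc, Fin.snoc_castSucc, Fin.snoc_last]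
    rw [show d + (∑ j, b j + (m + n + 1)) = d + 1 + (∑ j, b j + m + n) by ring]
    field_simp

theorem integral_canonicalSimplex_simplexGenPow (d : ℕ) (a : Fin (d + 1) → ℕ) :
    ∫ y in canonicalSimplex d, simplexGenPow d a y ∂((d ! : ℝ≥0∞) • volume)
      = d ! * (∏ j, ((a j)! : ℝ)) / (d + ∑ j, a j)! := by
  have hnonneg : 0 ≤ᵐ[volume.restrict (canonicalSimplex d)] simplexGenPow d a :=
    ae_restrict_of_forall_mem (measurableSet_canonicalSimplex d) fun y hy =>
      simplexGenPow_nonneg a hy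
  rw [Measure.restrict_smul, integral_smul_measure,
    integral_eq_lintegral_of_nonneg_ae hnonneg
      (measurable_simplexGenPow d a).aestronglyMeasurable,
    setLIntegral_canonicalSimplex_simplexGenPow, ENNReal.toReal_ofReal (by positivity),
    ENNReal.toReal_natCast, smul_eq_mul, mul_div_assoc]

theorem sum_piAntidiag_simplexGenPow_div_integral (d k : ℕ) (x : Fin d → ℝ) :
    ∑ α ∈ piAntidiag univ k, simplexGenPow d α x /
        ∫ y in canonicalSimplex d, simplexGenPow d α y ∂((d ! : ℝ≥0∞) • volume)
      = (d + k).choose k := by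
  calc _ = ∑ α ∈ piAntidiag univ k, ((d + k).choose k : ℝ)
          * (Nat.multinomial univ α * ∏ j, simplexGen d j x ^ α j) := by
        refine sum_congr rfl fun α hα => ?_
        have hk : ∑ j, α j = k := (mem_piAntidiag.1 hα).1
        have hspec : (∏ j, ((α j)! : ℝ)) * Nat.multinomial univ α = k ! := by
          exact_mod_cast hk ▸ Nat.multinomial_spec univ α
        rw [integral_canonicalSimplex_simplexGenPow, hk, ← Nat.choose_symm_add,
          Nat.cast_add_choose, simplexGenPow, ← hspec]
        have hmul : (Nat.multinomial univ α : ℝ) ≠ 0 :=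
          Nat.cast_ne_zero.2 (Nat.multinomial_pos _ _).ne'
        field_simp
    _ = (d + k).choose k * (∑ j, simplexGen d j x) ^ k := by
        rw [← mul_sum, sum_pow_eq_sum_piAntidiag]
    _ = _ := by rw [sum_simplexGen, one_pow, mul_one]

theorem sum_filter_sum_le_eq_sum_range_sum_piAntidiag {ι M : Type*} [Fintype ι]
    [DecidableEq ι] [AddCommMonoid M] (n : ℕ) (f : (ι → ℕ) → M) :
    ∑ α ∈ (Fintype.piFinset fun _ : ι => range (n + 1)) with ∑ j, α j ≤ n, f α
      = ∑ k ∈ range (n + 1), ∑ α ∈ piAntidiag univ k, f α := by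
  have hdeg : ∀ α ∈ {α ∈ Fintype.piFinset (fun _ : ι => range (n + 1)) | ∑ j, α j ≤ n},
      ∑ j, α j ∈ range (n + 1) := fun α hα =>
    mem_range.2 (Nat.lt_succ_of_le (mem_filter.1 hα).2)
  rw [← sum_fiberwise_of_maps_to hdeg]
  refine sum_congr rfl fun k hk => ?_
  congr 1
  ext α
  have hle (j : ι) : α j ≤ ∑ i, α i := single_le_sum (fun i _ => Nat.zero_le _) (mem_univ j)
  simp only [mem_filter, Fintype.mem_piFinset, mem_range, mem_piAntidiag, mem_univ,
    implies_true, and_true] at hk ⊢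
  constructor
  · exact fun h => h.2
  · rintro rfl
    exact ⟨⟨fun j => Nat.lt_of_le_of_lt (hle j) hk, Nat.le_of_lt_succ hk⟩, rfl⟩

/-- Degree-2 partition of unity on the canonical simplex: with `φ*` the uniform
probability measure on `S` (Lebesgue measure scaled by `d!`), summing
`g(x)^α / φ*(g^α)` over all multi-indices `α ∈ ℕ^{d+1}` with `|α| ≤ 2` gives
`(d+2)(d+3)/2` for every `x ∈ ℝ^d`. -/
theorem simplex_degree_two_partition (d : ℕ) (x : Fin d → ℝ) :
    ∑ α ∈ (Fintype.piFinset fun _ : Fin (d + 1) => Finset.range 3).filter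
        (fun α => (∑ j, α j) ≤ 2),
      (∏ j, simplexGen d j x ^ α j) /
        (∫ y in {y : Fin d → ℝ | (∀ i, 0 ≤ y i) ∧ (∑ i, y i) ≤ 1},
          (∏ j, simplexGen d j y ^ α j) ∂((d.factorial : ℝ≥0∞) • volume))
      = ((d : ℝ) + 2) * ((d : ℝ) + 3) / 2 := by
  rw [sum_filter_sum_le_eq_sum_range_sum_piAntidiag 2]
  have hdeg := sum_piAntidiag_simplexGenPow_div_integral d
  simp only [simplexGenPow, canonicalSimplex] at hdeg
  simp only [hdeg, sum_range_succ, range_one, sum_singleton, add_zero,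
    Nat.choose_zero_right, Nat.choose_one_right, Nat.cast_choose_two]
  push_cast
  ring
end

section
/- The vector c* with c*_{ij} = (i+j+1)!/(i! j!) for i+j ≤ n is the unique maximizer of ∑_{i+j ≤ n} log c_{ij} over all c > 0 satisfying ∑_{i+j ≤ n} c_{ij} x^i (1-x)^j = (n+1)(n+2)/2 for all real x. -/
open Finset Real

private lemma prodFact (i j : ℕ) :
    (Nat.factorial i : ℂ) * ∏ m ∈ Finset.range (j + 1), ((i : ℂ) + 1 + m) =
      (Nat.factorial (i + j + 1) : ℂ) := by
  induction j with
  | zero =>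
    simp [Nat.factorial_succ]
    ring
  | succ j ih =>
    rw [Finset.prod_range_succ, ← mul_assoc, ih]
    have : i + (j + 1) + 1 = (i + j + 1) + 1 := by ring
    rw [this, Nat.factorial_succ (i + j + 1)]
    push_cast
    ring

private lemma betaNat (i j : ℕ) :
    ∫ x in (0:ℝ)..1, x ^ i * (1 - x) ^ j =
      (Nat.factorial i : ℝ) * (Nat.factorial j : ℝ) / (Nat.factorial (i + j + 1) : ℝ) := by
  have h := Complex.betaIntegral_eval_nat_add_one_right (u := (i : ℂ) + 1)
    (by simp; positivity) j
  rw [Complex.betaIntegral] at h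
  have hfun : ∀ x : ℝ, ((x : ℂ)) ^ ((i : ℂ) + 1 - 1) * (1 - (x : ℂ)) ^ ((j : ℂ) + 1 - 1)
      = ((x ^ i * (1 - x) ^ j : ℝ) : ℂ) := by
    intro x
    rw [add_sub_cancel_right, add_sub_cancel_right, Complex.cpow_natCast, Complex.cpow_natCast]
    push_cast
    ring
  simp only [hfun] at h
  rw [intervalIntegral.integral_ofReal] at h
  have hP := prodFact i j
  have hi0 : (Nat.factorial i : ℂ) ≠ 0 := by exact_mod_cast Nat.factorial_ne_zero i
  have hF0 : (Nat.factorial (i + j + 1) : ℂ) ≠ 0 := by exact_mod_cast Nat.factorial_ne_zero _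
  have hP0 : (∏ m ∈ Finset.range (j + 1), ((i : ℂ) + 1 + m)) ≠ 0 := by
    intro h0
    rw [h0, mul_zero] at hP
    exact hF0 hP.symm
  have : ((∫ x in (0:ℝ)..1, x ^ i * (1 - x) ^ j : ℝ) : ℂ)
      = ((Nat.factorial i : ℝ) * (Nat.factorial j : ℝ) / (Nat.factorial (i + j + 1) : ℝ) : ℝ) := by
    rw [h]
    push_cast
    rw [eq_div_iff hF0, div_mul_eq_mul_div, div_eq_iff hP0, ← hP]
    ring
  exact_mod_cast this

private lemma gaussTri (m : ℕ) : ∑ k ∈ Finset.range m, ((k : ℝ) + 1) = m * (m + 1) / 2 := by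
  induction m with
  | zero => simp
  | succ m ih => rw [Finset.sum_range_succ, ih]; push_cast; ring

/-- integral of the constraint -/
private lemma sumRatio (n : ℕ) (c : ℕ → ℕ → ℝ)
    (hc : ∀ x : ℝ, ∑ k ∈ Finset.range (n + 1), ∑ i ∈ Finset.range (k + 1),
          c i (k - i) * x ^ i * (1 - x) ^ (k - i)
        = (n + 1 : ℝ) * (n + 2) / 2) :
    ∑ k ∈ Finset.range (n + 1), ∑ i ∈ Finset.range (k + 1),
      c i (k - i) * ((Nat.factorial i : ℝ) * (Nat.factorial (k - i) : ℝ)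
        / (Nat.factorial (k + 1) : ℝ))
      = (n + 1 : ℝ) * (n + 2) / 2 := by
  have hcont : ∀ k i : ℕ, Continuous (fun x : ℝ => c i (k - i) * x ^ i * (1 - x) ^ (k - i)) := by
    intro k i
    exact (continuous_const.mul (continuous_pow i)).mul
      ((continuous_const.sub continuous_id).pow _)
  have h1 : (∫ x in (0:ℝ)..1, ∑ k ∈ Finset.range (n + 1), ∑ i ∈ Finset.range (k + 1),
      c i (k - i) * x ^ i * (1 - x) ^ (k - i)) = (n + 1 : ℝ) * (n + 2) / 2 := by
    rw [intervalIntegral.integral_congr (g := fun _ => (n + 1 : ℝ) * (n + 2) / 2)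
      (fun x _ => hc x)]
    simp
  rw [intervalIntegral.integral_finset_sum (fun k _ =>
      (continuous_finset_sum _ fun i _ => hcont k i).intervalIntegrable _ _)] at h1
  have h2 : ∀ k ∈ Finset.range (n + 1),
      (∫ x in (0:ℝ)..1, ∑ i ∈ Finset.range (k + 1),
        c i (k - i) * x ^ i * (1 - x) ^ (k - i))
      = ∑ i ∈ Finset.range (k + 1),
        c i (k - i) * ((Nat.factorial i : ℝ) * (Nat.factorial (k - i) : ℝ)
          / (Nat.factorial (k + 1) : ℝ)) := by
    intro k hk
    rw [intervalIntegral.integral_finset_sum (fun i _ => (hcont k i).intervalIntegrable _ _)]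
    refine Finset.sum_congr rfl fun i hi => ?_
    have hik : i ≤ k := Nat.lt_succ_iff.mp (Finset.mem_range.mp hi)
    have : i + (k - i) + 1 = k + 1 := by omega
    simp only [mul_assoc]
    rw [intervalIntegral.integral_const_mul, betaNat, this]
  rw [Finset.sum_congr rfl h2] at h1
  exact h1

/-- The vector `c*` with `c*_{ij} = (i+j+1)!/(i! j!)` is the unique maximizer of
`∑_{i+j≤n} log c_{ij}` over strictly positive vectors `c` satisfying the
polynomial identity `∑_{i+j≤n} c_{ij} x^i (1-x)^j = (n+1)(n+2)/2` for all real `x`. -/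
theorem max_entropy_unique_maximizer (n : ℕ)
    (cstar : ℕ → ℕ → ℝ)
    (hcstar : ∀ i j, cstar i j = (Nat.factorial (i + j + 1) : ℝ) /
      ((Nat.factorial i : ℝ) * (Nat.factorial j : ℝ))) :
    -- `c*` is feasible
    ((∀ i j, i + j ≤ n → 0 < cstar i j) ∧
      (∀ x : ℝ, ∑ k ∈ Finset.range (n + 1), ∑ i ∈ Finset.range (k + 1),
          cstar i (k - i) * x ^ i * (1 - x) ^ (k - i)
        = (n + 1 : ℝ) * (n + 2) / 2)) ∧
    -- `c*` maximizes the entropy objective, and is the unique maximizer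
    (∀ c : ℕ → ℕ → ℝ, (∀ i j, i + j ≤ n → 0 < c i j) →
      (∀ x : ℝ, ∑ k ∈ Finset.range (n + 1), ∑ i ∈ Finset.range (k + 1),
          c i (k - i) * x ^ i * (1 - x) ^ (k - i)
        = (n + 1 : ℝ) * (n + 2) / 2) →
      ((∑ k ∈ Finset.range (n + 1), ∑ i ∈ Finset.range (k + 1),
          Real.log (c i (k - i)))
        ≤ ∑ k ∈ Finset.range (n + 1), ∑ i ∈ Finset.range (k + 1),
            Real.log (cstar i (k - i))) ∧
      ((∑ k ∈ Finset.range (n + 1), ∑ i ∈ Finset.range (k + 1),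
          Real.log (c i (k - i)))
        = (∑ k ∈ Finset.range (n + 1), ∑ i ∈ Finset.range (k + 1),
            Real.log (cstar i (k - i)))
        → ∀ i j, i + j ≤ n → c i j = cstar i j)) := by
  have hpos : ∀ i j, 0 < cstar i j := by
    intro i j
    rw [hcstar]
    have h1 : (0:ℝ) < (Nat.factorial (i + j + 1) : ℝ) := by
      exact_mod_cast Nat.factorial_pos _
    have h2 : (0:ℝ) < (Nat.factorial i : ℝ) := by exact_mod_cast Nat.factorial_pos _
    have h3 : (0:ℝ) < (Nat.factorial j : ℝ) := by exact_mod_cast Nat.factorial_pos _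
    exact div_pos h1 (mul_pos h2 h3)
  have hcs : ∀ k i, i ≤ k → cstar i (k - i) =
      ((Nat.factorial (k + 1) : ℝ)) / ((Nat.factorial i : ℝ) * (Nat.factorial (k - i) : ℝ)) := by
    intro k i hik
    rw [hcstar, show i + (k - i) + 1 = k + 1 from by omega]
  have feas : ∀ x : ℝ, ∑ k ∈ Finset.range (n + 1), ∑ i ∈ Finset.range (k + 1),
      cstar i (k - i) * x ^ i * (1 - x) ^ (k - i) = (n + 1 : ℝ) * (n + 2) / 2 := by
    intro x
    have hinner : ∀ k ∈ Finset.range (n + 1),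
        ∑ i ∈ Finset.range (k + 1), cstar i (k - i) * x ^ i * (1 - x) ^ (k - i)
          = (k : ℝ) + 1 := by
      intro k _
      calc ∑ i ∈ Finset.range (k + 1), cstar i (k - i) * x ^ i * (1 - x) ^ (k - i)
          = ∑ i ∈ Finset.range (k + 1),
              ((k : ℝ) + 1) * (x ^ i * (1 - x) ^ (k - i) * (k.choose i : ℝ)) := by
            refine Finset.sum_congr rfl fun i hi => ?_
            have hik : i ≤ k := Nat.lt_succ_iff.mp (Finset.mem_range.mp hi)
            rw [hcs k i hik, Nat.cast_choose ℝ hik, Nat.factorial_succ]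
            push_cast
            ring
        _ = ((k : ℝ) + 1) * ∑ i ∈ Finset.range (k + 1),
              x ^ i * (1 - x) ^ (k - i) * (k.choose i : ℝ) := by rw [Finset.mul_sum]
        _ = (k : ℝ) + 1 := by
            rw [← add_pow]
            simp
    rw [Finset.sum_congr rfl hinner, gaussTri]
    push_cast
    ring
  refine ⟨⟨fun i j _ => hpos i j, feas⟩, ?_⟩
  intro c hcpos hcfeas
  have hratio := sumRatio n c hcfeas
  have hdiv : ∀ k i, i ≤ k → c i (k - i) *
      ((Nat.factorial i : ℝ) * (Nat.factorial (k - i) : ℝ) / (Nat.factorial (k + 1) : ℝ))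
      = c i (k - i) / cstar i (k - i) := by
    intro k i hik
    rw [hcs k i hik, div_div_eq_mul_div]
    ring
  have hsum : ∑ k ∈ Finset.range (n + 1), ∑ i ∈ Finset.range (k + 1),
      c i (k - i) / cstar i (k - i) = (n + 1 : ℝ) * (n + 2) / 2 := by
    rw [← hratio]
    exact Finset.sum_congr rfl fun k _ => Finset.sum_congr rfl fun i hi =>
      (hdiv k i (Nat.lt_succ_iff.mp (Finset.mem_range.mp hi))).symm
  have hcount : ∑ k ∈ Finset.range (n + 1), ∑ i ∈ Finset.range (k + 1), (1 : ℝ)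
      = (n + 1 : ℝ) * (n + 2) / 2 := by
    have h1 : ∀ k ∈ Finset.range (n + 1), ∑ _i ∈ Finset.range (k + 1), (1 : ℝ)
        = (k : ℝ) + 1 := by
      intro k _
      simp [Finset.sum_const]
    rw [Finset.sum_congr rfl h1, gaussTri]
    push_cast
    ring
  have hle : ∀ k ∈ Finset.range (n + 1), ∀ i ∈ Finset.range (k + 1),
      Real.log (c i (k - i)) - Real.log (cstar i (k - i))
        ≤ c i (k - i) / cstar i (k - i) - 1 := by
    intro k hk i hi
    have hik : i ≤ k := Nat.lt_succ_iff.mp (Finset.mem_range.mp hi)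
    have hkn : k ≤ n := Nat.lt_succ_iff.mp (Finset.mem_range.mp hk)
    have hcp : 0 < c i (k - i) := hcpos i (k - i) (by omega)
    have hratpos : 0 < c i (k - i) / cstar i (k - i) := div_pos hcp (hpos _ _)
    have := Real.log_le_sub_one_of_pos hratpos
    rwa [Real.log_div (ne_of_gt hcp) (ne_of_gt (hpos _ _))] at this
  have hRHS0 : ∑ k ∈ Finset.range (n + 1), ∑ i ∈ Finset.range (k + 1),
      (c i (k - i) / cstar i (k - i) - 1) = 0 := by
    simp only [Finset.sum_sub_distrib]
    rw [hsum, hcount]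
    ring
  constructor
  · have hkey : ∑ k ∈ Finset.range (n + 1), ∑ i ∈ Finset.range (k + 1),
        (Real.log (c i (k - i)) - Real.log (cstar i (k - i)))
        ≤ ∑ k ∈ Finset.range (n + 1), ∑ i ∈ Finset.range (k + 1),
            (c i (k - i) / cstar i (k - i) - 1) :=
      Finset.sum_le_sum fun k hk => Finset.sum_le_sum (hle k hk)
    rw [hRHS0] at hkey
    simp only [Finset.sum_sub_distrib] at hkey
    linarith
  · intro heq i j hij
    have hLHS0 : ∑ k ∈ Finset.range (n + 1), ∑ i ∈ Finset.range (k + 1),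
        (Real.log (c i (k - i)) - Real.log (cstar i (k - i))) = 0 := by
      simp only [Finset.sum_sub_distrib]
      rw [heq]
      ring
    have houter := (Finset.sum_eq_sum_iff_of_le
      (fun k hk => Finset.sum_le_sum (hle k hk))).mp (by rw [hLHS0, hRHS0])
    have hkmem : i + j ∈ Finset.range (n + 1) := Finset.mem_range.mpr (by omega)
    have himem : i ∈ Finset.range (i + j + 1) := Finset.mem_range.mpr (by omega)
    have hinner := (Finset.sum_eq_sum_iff_of_le (hle (i + j) hkmem)).mp
      (houter (i + j) hkmem) i himem
    rw [show (i + j) - i = j from by omega] at hinner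
    have hr : c i j / cstar i j = 1 := by
      by_contra hne
      have hlt := Real.log_lt_sub_one_of_pos (div_pos (hcpos i j hij) (hpos i j)) hne
      rw [Real.log_div (ne_of_gt (hcpos i j hij)) (ne_of_gt (hpos i j))] at hlt
      linarith
    exact (div_eq_one_iff_eq (ne_of_gt (hpos i j))).mp hr
end
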